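/- arXiv:2106.12437 — 2 statements merged into one kernel-verified Lean document; each statement's English description precedes it below -/
import Mathlib

section
/- Let ι be an index type, (H i) a family of complex Hilbert spaces, and K = lp (fun i => H i) 2 their ℓ²-Hilbert direct sum with canonical isometric embeddings V i : H i →ₗᵢ[ℂ] K. Let M ≥ 0, let (T_j) be a net of continuous linear operators on K with ‖T_j‖ ≤ M for all j, and let T be a continuous linear operator on K with ‖T‖ ≤ M. Assume all the operators are block diagonal, i.e. for every index i and every x ∈ H i one has T_j (V i x) ∈ Set.range (V i) for all j and T (V i x) ∈ Set.range (V i). Then T_j converges to T in the weak operator topology on K if and only if for every index i and all x, y ∈ H i one has ⟪T_j (V i x), V i y⟫ → ⟪T (V i x), V i y⟫. -/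
open Filter Topology
open scoped ComplexInnerProductSpace ENNReal

/-- The canonical isometric embedding of the `i`-th summand into the `ℓ²`-Hilbert
direct sum `lp H 2`. -/
noncomputable def hilbertSumSingle {ι : Type*} [DecidableEq ι] (H : ι → Type*)
    [∀ i, NormedAddCommGroup (H i)] [∀ i, InnerProductSpace ℂ (H i)] (i : ι) :
    H i →ₗᵢ[ℂ] lp H 2 where
  toFun x := lp.single 2 i x
  map_add' x y := by
    apply lp.ext
    funext j
    by_cases h : j = i
    · subst h
      simp [lp.single_apply_self, lp.coeFn_add]
    · simp [lp.single_apply_ne _ _ _ h, lp.coeFn_add]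
  map_smul' c x := by simp [lp.single_smul]
  norm_map' x := by
    have h2 : 0 < (2 : ℝ≥0∞).toReal := by norm_num
    simpa using lp.norm_single h2 (Function.update (fun j => (0 : H j)) i x) i

/-!
For a uniformly bounded family of operators, the set of vectors at which it converges pointwise
is a closed subspace (closed by equicontinuity), so convergence may be tested on a set with dense
span. Applied in each variable of `⟪T x, y⟫`, this reduces weak operator convergence on `lp H 2`
to the coefficients `⟪T (V i x), V i' y⟫`, and those with `i ≠ i'` vanish identically for block
diagonal operators.
-/

section PointwiseConvergence

variable {𝕜 𝕜₂ E F J : Type*} [NontriviallyNormedField 𝕜] [NontriviallyNormedField 𝕜₂]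
  {σ : 𝕜 →+* 𝕜₂} [RingHomIsometric σ] [SeminormedAddCommGroup E] [NormedSpace 𝕜 E]
  [NormedAddCommGroup F] [NormedSpace 𝕜₂ F]

def ContinuousLinearMap.convergenceSubmodule (l : Filter J) (f : J → E →SL[σ] F)
    (f₀ : E →SL[σ] F) : Submodule 𝕜 E where
  carrier := {x | Tendsto (fun j => f j x) l (𝓝 (f₀ x))}
  zero_mem' := by simpa using tendsto_const_nhds
  add_mem' hx hy := by simpa using hx.add hy
  smul_mem' c x hx := by simpa using hx.const_smul (σ c)

theorem ContinuousLinearMap.tendsto_apply_of_dense_span {l : Filter J} {f : J → E →SL[σ] F}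
    {f₀ : E →SL[σ] F} {C : ℝ} (hf : ∀ j, ‖f j‖ ≤ C) {s : Set E}
    (hs : Dense (Submodule.span 𝕜 s : Set E))
    (h : ∀ x ∈ s, Tendsto (fun j => f j x) l (𝓝 (f₀ x))) (x : E) :
    Tendsto (fun j => f j x) l (𝓝 (f₀ x)) := by
  have hequi : Equicontinuous fun j => ⇑(f j) :=
    ((NormedSpace.equicontinuous_TFAE f).out 5 1).mp (⟨C, hf⟩ : ∃ C, ∀ j, ‖f j‖ ≤ C)
  have hclosed : IsClosed {x | Tendsto (fun j => f j x) l (𝓝 (f₀ x))} :=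
    hequi.isClosed_setOfPred_tendsto f₀.continuous
  have hspan : Submodule.span 𝕜 s ≤ convergenceSubmodule l f f₀ := Submodule.span_le.mpr h
  exact closure_minimal hspan hclosed (hs.closure_eq.symm ▸ Set.mem_univ x)

end PointwiseConvergence

theorem tendsto_inner_apply_of_dense_span {𝕜 E F J : Type*} [RCLike 𝕜]
    [SeminormedAddCommGroup E] [NormedSpace 𝕜 E] [NormedAddCommGroup F] [InnerProductSpace 𝕜 F]
    {l : Filter J} {T : J → E →L[𝕜] F} {T₀ : E →L[𝕜] F} {C : ℝ} (hT : ∀ j, ‖T j‖ ≤ C)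
    {s : Set E} (hs : Dense (Submodule.span 𝕜 s : Set E))
    {t : Set F} (ht : Dense (Submodule.span 𝕜 t : Set F))
    (h : ∀ x ∈ s, ∀ y ∈ t, Tendsto (fun j => inner 𝕜 (T j x) y) l (𝓝 (inner 𝕜 (T₀ x) y)))
    (x : E) (y : F) :
    Tendsto (fun j => inner 𝕜 (T j x) y) l (𝓝 (inner 𝕜 (T₀ x) y)) := by
  have h_left : ∀ x ∈ s, ∀ y, Tendsto (fun j => inner 𝕜 (T j x) y) l (𝓝 (inner 𝕜 (T₀ x) y)) :=
    fun x hx => ContinuousLinearMap.tendsto_apply_of_dense_span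
      (f := fun j => innerSL 𝕜 (T j x)) (f₀ := innerSL 𝕜 (T₀ x))
      (fun j => (innerSL_apply_norm 𝕜 _).trans_le ((T j).le_of_opNorm_le (hT j) x)) ht (h x hx)
  exact ContinuousLinearMap.tendsto_apply_of_dense_span
    (f := fun j => (innerSLFlip 𝕜 y).comp (T j)) (f₀ := (innerSLFlip 𝕜 y).comp T₀)
    (C := ‖innerSLFlip 𝕜 y‖ * C)
    (fun j => ((innerSLFlip 𝕜 y).opNorm_comp_le _).trans
      (mul_le_mul_of_nonneg_left (hT j) (norm_nonneg _))) hs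
    (fun x hx => h_left x hx y) x

section HilbertSum

variable {ι : Type*} [DecidableEq ι] {H : ι → Type*} [∀ i, NormedAddCommGroup (H i)]
  [∀ i, InnerProductSpace ℂ (H i)]

theorem hilbertSumSingle_apply (i : ι) (x : H i) : hilbertSumSingle H i x = lp.single 2 i x :=
  rfl

theorem dense_span_iUnion_range_hilbertSumSingle :
    Dense (Submodule.span ℂ (⋃ i, Set.range (hilbertSumSingle H i)) : Set (lp H 2)) := by
  intro f
  refine mem_closure_of_tendsto (lp.hasSum_single ENNReal.ofNat_ne_top f)
    (Eventually.of_forall fun _ => Submodule.sum_mem _ fun i _ => ?_)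
  exact Submodule.subset_span (Set.mem_iUnion_of_mem i ⟨f i, rfl⟩)

theorem inner_eq_zero_of_mem_range_hilbertSumSingle {i i' : ι} (h : i ≠ i') {z : lp H 2}
    (hz : z ∈ Set.range (hilbertSumSingle H i)) (y : H i') :
    ⟪z, hilbertSumSingle H i' y⟫ = 0 := by
  obtain ⟨x, rfl⟩ := hz
  rw [hilbertSumSingle_apply, hilbertSumSingle_apply, lp.inner_single_right,
    lp.single_apply_ne 2 i x h.symm, inner_zero_left]

end HilbertSum

theorem blockDiagonal_tendsto_wot_iff_components_general
    {ι : Type*} [DecidableEq ι] {H : ι → Type*}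
    [∀ i, NormedAddCommGroup (H i)] [∀ i, InnerProductSpace ℂ (H i)]
    {J : Type*} (l : Filter J)
    (M : ℝ)
    (T : J → lp H 2 →L[ℂ] lp H 2) (hT : ∀ j, ‖T j‖ ≤ M)
    (T₀ : lp H 2 →L[ℂ] lp H 2)
    (hblock : ∀ (j : J) (i : ι) (x : H i),
      T j (hilbertSumSingle H i x) ∈ Set.range (hilbertSumSingle H i))
    (hblock₀ : ∀ (i : ι) (x : H i),
      T₀ (hilbertSumSingle H i x) ∈ Set.range (hilbertSumSingle H i)) :
    (∀ x y : lp H 2, Tendsto (fun j => ⟪T j x, y⟫) l (𝓝 ⟪T₀ x, y⟫)) ↔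
      ∀ (i : ι) (x y : H i),
        Tendsto (fun j => ⟪T j (hilbertSumSingle H i x), hilbertSumSingle H i y⟫) l
          (𝓝 ⟪T₀ (hilbertSumSingle H i x), hilbertSumSingle H i y⟫) := by
  refine ⟨fun h i x y => h _ _, fun h => ?_⟩
  refine tendsto_inner_apply_of_dense_span hT dense_span_iUnion_range_hilbertSumSingle
    dense_span_iUnion_range_hilbertSumSingle ?_
  intro _ hx _ hy
  obtain ⟨i, x, rfl⟩ := Set.mem_iUnion.mp hx
  obtain ⟨i', y, rfl⟩ := Set.mem_iUnion.mp hy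
  by_cases hii' : i = i'
  · subst hii'
    exact h i x y
  · have h_off : ∀ j, ⟪T j (hilbertSumSingle H i x), hilbertSumSingle H i' y⟫ = 0 :=
      fun j => inner_eq_zero_of_mem_range_hilbertSumSingle hii' (hblock j i x) y
    simp only [h_off, inner_eq_zero_of_mem_range_hilbertSumSingle hii' (hblock₀ i x) y]
    exact tendsto_const_nhds

/-- On a norm-bounded set of block diagonal operators on the `ℓ²`-Hilbert direct sum
`lp H 2` of Hilbert spaces `H i`, a net converges in the weak operator topology iff
all "matrix coefficients" against vectors from the individual summands converge. -/
theorem blockDiagonal_tendsto_wot_iff_components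
    {ι : Type*} [DecidableEq ι] {H : ι → Type*}
    [∀ i, NormedAddCommGroup (H i)] [∀ i, InnerProductSpace ℂ (H i)]
    [∀ i, CompleteSpace (H i)]
    {J : Type*} (l : Filter J) [l.NeBot]
    (M : ℝ) (hM : 0 ≤ M)
    (T : J → lp H 2 →L[ℂ] lp H 2) (hT : ∀ j, ‖T j‖ ≤ M)
    (T₀ : lp H 2 →L[ℂ] lp H 2) (hT₀ : ‖T₀‖ ≤ M)
    (hblock : ∀ (j : J) (i : ι) (x : H i),
      T j (hilbertSumSingle H i x) ∈ Set.range (hilbertSumSingle H i))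
    (hblock₀ : ∀ (i : ι) (x : H i),
      T₀ (hilbertSumSingle H i x) ∈ Set.range (hilbertSumSingle H i)) :
    (∀ x y : lp H 2, Tendsto (fun j => ⟪T j x, y⟫) l (𝓝 ⟪T₀ x, y⟫)) ↔
      ∀ (i : ι) (x y : H i),
        Tendsto (fun j => ⟪T j (hilbertSumSingle H i x), hilbertSumSingle H i y⟫) l
          (𝓝 ⟪T₀ (hilbertSumSingle H i x), hilbertSumSingle H i y⟫) :=
  blockDiagonal_tendsto_wot_iff_components_general l M T hT T₀ hblock hblock₀
end

section
/- Let C, E, D be bicategories and let G : C ⥤ E be a 0-dominant pseudofunctor. Then for any pseudofunctors A, B : E ⥤ D, any strong natural transformations φ, ψ : A ⟶ B, and any modifications m, n : φ ⟶ ψ, if m.app (G.obj c) = n.app (G.obj c) for every object c of C, then m = n. (Precomposition with a 0-dominant pseudofunctor is faithful on 2-morphisms.) -/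
open CategoryTheory

universe w₁ v₁ u₁ w₂ v₂ u₂ w₃ v₃ u₃

/-- A strong natural transformation `φ : A ⟶ B` between pseudofunctors `A, B : E ⥤ D`
consists of 1-morphisms `φ.app e : A.obj e ⟶ B.obj e` together with invertible naturality
2-morphisms `φ.naturality f : A.map f ≫ φ.app e' ≅ φ.app e ≫ B.map f`. -/
structure PseudoStrongNatTrans {E : Type u₂} [Bicategory.{w₂, v₂} E]
    {D : Type u₃} [Bicategory.{w₃, v₃} D] (A B : Pseudofunctor E D) where
  app : ∀ e : E, A.obj e ⟶ B.obj e
  naturality : ∀ {e e' : E} (f : e ⟶ e'), A.map f ≫ app e' ≅ app e ≫ B.map f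

open Bicategory in
/-- A modification `m : φ ⟶ ψ` between strong natural transformations is a family of
2-morphisms `m.app e : φ.app e ⟶ ψ.app e` compatible with the naturality constraints. -/
structure PseudoModification {E : Type u₂} [Bicategory.{w₂, v₂} E]
    {D : Type u₃} [Bicategory.{w₃, v₃} D] {A B : Pseudofunctor E D}
    (φ ψ : PseudoStrongNatTrans A B) where
  app : ∀ e : E, φ.app e ⟶ ψ.app e
  naturality : ∀ {e e' : E} (f : e ⟶ e'),
    A.map f ◁ app e' ≫ (ψ.naturality f).hom = (φ.naturality f).hom ≫ app e ▷ B.map f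

/-- A condensation from `a` to `b` in a bicategory: 1-morphisms `X : a ⟶ b`, `X' : b ⟶ a`
and 2-morphisms `ε : X' ≫ X ⟶ 𝟙 b`, `δ : 𝟙 b ⟶ X' ≫ X` with `δ ≫ ε = 𝟙 (𝟙 b)`. -/
structure Condensation {B : Type u₁} [Bicategory.{w₁, v₁} B] (a b : B) where
  X : a ⟶ b
  X' : b ⟶ a
  ε : X' ≫ X ⟶ 𝟙 b
  δ : 𝟙 b ⟶ X' ≫ X
  splitting : δ ≫ ε = 𝟙 (𝟙 b)

/-- A pseudofunctor `G : C ⥤ E` is 0-dominant if every object `e` of `E` admits a condensation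
from `G.obj c` for some object `c` of `C`. -/
def CategoryTheory.Pseudofunctor.ZeroDominant {C : Type u₁} [Bicategory.{w₁, v₁} C]
    {E : Type u₂} [Bicategory.{w₂, v₂} E] (G : Pseudofunctor C E) : Prop :=
  ∀ e : E, ∃ c : C, Nonempty (Condensation (G.obj c) e)

/-!
A condensation `X : a ⟶ b`, `X' : b ⟶ a` exhibits `𝟙 b` as a retract of `X' ≫ X`, so whiskering
on the left by `X` is injective on 2-morphisms; and pseudofunctors preserve condensations. Given a
condensation `X : G.obj c ⟶ e`, the naturality square of a modification `m` at `X` determines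
`A.map X ◁ m.app e` by `m.app (G.obj c)`, and injectivity of `A.map X ◁ -` recovers `m.app e`.
-/

open Bicategory

namespace Condensation

variable {B : Type u₁} [Bicategory.{w₁, v₁} B] {a b : B}

def map {B' : Type u₂} [Bicategory.{w₂, v₂} B'] (F : Pseudofunctor B B') (κ : Condensation a b) :
    Condensation (F.obj a) (F.obj b) :=
  ⟨F.map κ.X, F.map κ.X', (F.mapComp κ.X' κ.X).inv ≫ F.map₂ κ.ε ≫ (F.mapId b).hom,
    (F.mapId b).inv ≫ F.map₂ κ.δ ≫ (F.mapComp κ.X' κ.X).hom, by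
      simp only [Category.assoc, Iso.hom_inv_id_assoc, ← F.map₂_comp_assoc, κ.splitting,
        F.map₂_id, Category.id_comp, Iso.inv_hom_id]⟩

theorem whiskerLeft_injective (κ : Condensation a b) {c : B} {g h : b ⟶ c} {α β : g ⟶ h}
    (H : κ.X ◁ α = κ.X ◁ β) : α = β := by
  have retract (γ : g ⟶ h) : 𝟙 b ◁ γ = κ.δ ▷ g ≫ (κ.X' ≫ κ.X) ◁ γ ≫ κ.ε ▷ h := by
    rw [← whisker_exchange_assoc, ← comp_whiskerRight, κ.splitting, id_whiskerRight,
      Category.comp_id]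
  rw [← whiskerLeft_iff, retract, retract, comp_whiskerLeft, comp_whiskerLeft, H]

end Condensation

namespace PseudoModification

variable {E : Type u₂} [Bicategory.{w₂, v₂} E] {D : Type u₃} [Bicategory.{w₃, v₃} D]
  {A B : Pseudofunctor E D} {φ ψ : PseudoStrongNatTrans A B}

attribute [ext] PseudoModification

theorem whiskerLeft_app_eq_of_app_eq (m n : PseudoModification φ ψ) {e e' : E} (f : e ⟶ e')
    (h : m.app e = n.app e) : A.map f ◁ m.app e' = A.map f ◁ n.app e' :=
  (cancel_mono (ψ.naturality f).hom).mp (by rw [m.naturality, n.naturality, h])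

end PseudoModification

/-- Precomposition with a 0-dominant pseudofunctor is faithful on 2-morphisms: two
modifications agreeing on the image of `G` on objects are equal. -/
theorem precomp_faithful_of_zeroDominant
    {C : Type u₁} [Bicategory.{w₁, v₁} C] {E : Type u₂} [Bicategory.{w₂, v₂} E]
    {D : Type u₃} [Bicategory.{w₃, v₃} D]
    (G : Pseudofunctor C E) (hG : G.ZeroDominant)
    (A B : Pseudofunctor E D) (φ ψ : PseudoStrongNatTrans A B)
    (m n : PseudoModification φ ψ)
    (h : ∀ c : C, m.app (G.obj c) = n.app (G.obj c)) : m = n := by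
  ext e
  obtain ⟨c, ⟨κ⟩⟩ := hG e
  exact (κ.map A).whiskerLeft_injective (m.whiskerLeft_app_eq_of_app_eq n κ.X (h c))
end
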